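/- arXiv:1510.02875 — 2 statements merged into one kernel-verified Lean document; each statement's English description precedes it below -/
import Mathlib

section
/- For every odd positive integer n, there exists a legal game sequence of length at most 2n − 1 on the n×n chessboard whose set of placed squares is locked; and for every even integer n > 2, there exists a legal game sequence of length at most 2n − 3 whose set of placed squares is locked. -/
/-- Two distinct squares `(a,b)` and `(c,d)` attack each other if `a = c`, `b = d`,
`a + b = c + d`, or `a - b = c - d` (the last encoded as `a + d = c + b`). -/
def attacks (p q : ℕ × ℕ) : Prop :=
  p ≠ q ∧ (p.1 = q.1 ∨ p.2 = q.2 ∨ p.1 + p.2 = q.1 + q.2 ∨ p.1 + q.2 = q.1 + p.2)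

instance : ∀ p q : ℕ × ℕ, Decidable (attacks p q) := fun p q => by
  unfold attacks; infer_instance

/-- The squares of the `n × n` chessboard: pairs `(i,j)` with `1 ≤ i, j ≤ n`. -/
def board (n : ℕ) : Finset (ℕ × ℕ) := Finset.Icc 1 n ×ˢ Finset.Icc 1 n

/-- A legal game sequence: pairwise distinct squares of the board such that each newly
placed queen lands on a square attacked by an even number of previously placed queens. -/
def IsLegalSeq (n : ℕ) {k : ℕ} (q : Fin k → ℕ × ℕ) : Prop :=
  Function.Injective q ∧ (∀ i, q i ∈ board n) ∧
    ∀ i : Fin k, Even ((Finset.univ.filter fun j : Fin k => j < i ∧ attacks (q j) (q i)).card)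

/-- A set `S` of squares is locked if every square of the board not in `S` is attacked by
an odd number of squares of `S`. -/
def Locked (n : ℕ) (S : Finset (ℕ × ℕ)) : Prop :=
  ∀ p ∈ board n, p ∉ S → Odd ((S.filter fun s => attacks s p).card)

/-!
Let `hook k` be the set of squares `(1, b)` and `(a, 1)` with `2 ≤ a, b ≤ k`. For odd `k`, the
moves `(1, k+1)`, `(k+2, 1)`, `(1, k+2)`, `(k+1, 1)` played from `hook k` see `k - 1`, `k - 1`,
`k + 1`, `k + 1` earlier queens, so they are legal and lead to `hook (k + 2)`; hence `hook (2m+1)`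
is reached in `4m` moves. One more legal move, the corner `(1, 1)` on the `(2m+1)`-board or the
opposite corner `(2m+2, 2m+2)` on the `(2m+2)`-board, locks the board: away from the edges, a
square outside the set sees one queen of each arm in its row and column, equally many of the two
arms on its antidiagonal, and exactly one queen (of an arm or the added corner) on its diagonal.
-/

open Finset

theorem card_filter_insert {α : Type*} [DecidableEq α] (P : α → Prop) [DecidablePred P]
    {a : α} {s : Finset α} (ha : a ∉ s) :
    #((insert a s).filter P) = #(s.filter P) + if P a then 1 else 0 := by
  rw [filter_insert]
  split_ifs
  · exact card_insert_of_notMem fun h => ha (mem_of_mem_filter a h)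
  · rfl

theorem card_filter_eq_or_eq_or_eq {α : Type*} [DecidableEq α] (s : Finset α) {x y z : α}
    (hxy : x ≠ y) (hxz : x ≠ z) (hyz : y ≠ z) :
    #(s.filter fun b => b = x ∨ b = y ∨ b = z) =
      (if x ∈ s then 1 else 0) + (if y ∈ s then 1 else 0) + (if z ∈ s then 1 else 0) := by
  rw [filter_or, filter_or, filter_eq', filter_eq', filter_eq']
  split_ifs <;> simp [*, Ne.symm hxy]

theorem attacks_swap {p q : ℕ × ℕ} : attacks p.swap q.swap ↔ attacks p q := by
  obtain ⟨a, b⟩ := p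
  obtain ⟨c, d⟩ := q
  simp only [attacks, Prod.swap_prod_mk, ne_eq, Prod.mk.injEq]
  omega

def LegalReachable (n k : ℕ) (S : Finset (ℕ × ℕ)) : Prop :=
  ∃ q : Fin k → ℕ × ℕ, IsLegalSeq n q ∧ univ.image q = S

namespace LegalReachable

variable {n k : ℕ} {S : Finset (ℕ × ℕ)} {p : ℕ × ℕ}

theorem empty : LegalReachable n 0 ∅ :=
  ⟨Fin.elim0, ⟨fun i => i.elim0, fun i => i.elim0, fun i => i.elim0⟩, by simp⟩

theorem insert (h : LegalReachable n k S) (hp : p ∈ board n) (hpS : p ∉ S)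
    (heven : Even #(S.filter (attacks · p))) : LegalReachable n (k + 1) (insert p S) := by
  obtain ⟨q, ⟨hinj, hboard, hlegal⟩, rfl⟩ := h
  set q' : Fin (k + 1) → ℕ × ℕ := Fin.snoc q p
  refine ⟨q', ⟨?_, ?_, ?_⟩, ?_⟩
  · exact Fin.snoc_injective_of_injective hinj (by simpa using hpS)
  · intro i
    induction i using Fin.lastCases <;> simp [q', hp, hboard]
  · intro i
    induction i using Fin.lastCases with
    | cast i =>
      have hfilter : (univ.filter fun j => j < i.castSucc ∧ attacks (q' j) (q' i.castSucc)) =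
          (univ.filter fun j => j < i ∧ attacks (q j) (q i)).map Fin.castSuccEmb := by
        ext j
        induction j using Fin.lastCases <;> simp [q', Fin.castSucc_lt_last, not_lt_of_gt]
      rw [hfilter, card_map]
      exact hlegal i
    | last =>
      have hfilter : (univ.filter fun j => j < Fin.last k ∧ attacks (q' j) (q' (Fin.last k))) =
          (univ.filter fun j => attacks (q j) p).map Fin.castSuccEmb := by
        ext j
        induction j using Fin.lastCases <;> simp [q', Fin.castSucc_lt_last]
      rw [filter_image, card_image_of_injective _ hinj] at heven
      rwa [hfilter, card_map]
  · ext x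
    simp [q', Fin.exists_fin_succ', or_comm, eq_comm]

end LegalReachable

def rowArm (k : ℕ) : Finset (ℕ × ℕ) := (Icc 2 k).image ((1, ·))

def hook (k : ℕ) : Finset (ℕ × ℕ) := rowArm k ∪ (rowArm k).image Prod.swap

@[simp]
theorem mem_rowArm {k : ℕ} {p : ℕ × ℕ} :
    p ∈ rowArm k ↔ p.1 = 1 ∧ 2 ≤ p.2 ∧ p.2 ≤ k := by
  obtain ⟨a, b⟩ := p
  simp [rowArm, eq_comm, and_comm]

@[simp]
theorem mem_hook {k : ℕ} {p : ℕ × ℕ} :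
    p ∈ hook k ↔
      (p.1 = 1 ∧ 2 ≤ p.2 ∧ p.2 ≤ k) ∨ (p.2 = 1 ∧ 2 ≤ p.1 ∧ p.1 ≤ k) := by
  obtain ⟨a, b⟩ := p
  simp [hook]

/-- The column, antidiagonal and diagonal through `(i, j)` meet the first row at `j`,
`i + j - 1` and `j + 1 - i`. -/
def rowArmAttackCount (k i j : ℕ) : ℕ :=
  if i = 1 then k - 1 else
    (if 2 ≤ j ∧ j ≤ k then 1 else 0) + (if i + j ≤ k + 1 then 1 else 0) +
      (if i < j ∧ j + 1 ≤ k + i then 1 else 0)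

theorem card_rowArm_filter_attacks {k i j : ℕ} (hij : (i, j) ∉ rowArm k) (hi : 1 ≤ i)
    (hj : 1 ≤ j) : #((rowArm k).filter (attacks · (i, j))) = rowArmAttackCount k i j := by
  rw [rowArm, filter_image, card_image_of_injective _ (Prod.mk_right_injective 1)]
  unfold rowArmAttackCount
  by_cases hi1 : i = 1
  · subst hi1
    simp only [mem_rowArm, true_and] at hij
    have hall : ∀ b ∈ Icc 2 k, attacks (1, b) (1, j) := fun b hb => by
      rw [mem_Icc] at hb
      simp only [attacks, ne_eq, Prod.mk.injEq, true_and, true_or, and_true]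
      omega
    rw [if_pos rfl, filter_true_of_mem hall]
    simp
  · rw [if_neg hi1]
    have hrow : (Icc 2 k).filter (fun b => attacks (1, b) (i, j)) =
        (Icc 2 k).filter (fun b => b = j ∨ b = i + j - 1 ∨ b = j + 1 - i) := by
      refine filter_congr fun b hb => ?_
      rw [mem_Icc] at hb
      simp only [attacks, ne_eq, Prod.mk.injEq]
      omega
    rw [hrow, card_filter_eq_or_eq_or_eq _ (by omega) (by omega) (by omega)]
    simp only [mem_Icc]
    split_ifs <;> omega

theorem card_hook_filter_attacks {k i j : ℕ} (hij : (i, j) ∉ hook k) (hi : 1 ≤ i)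
    (hj : 1 ≤ j) :
    #((hook k).filter (attacks · (i, j))) =
      rowArmAttackCount k i j + rowArmAttackCount k j i := by
  simp only [mem_hook, not_or] at hij
  have hdisj : Disjoint (rowArm k) ((rowArm k).image Prod.swap) := by
    rw [disjoint_left]
    intro p hp hp'
    obtain ⟨q, hq, rfl⟩ := mem_image.1 hp'
    simp only [mem_rowArm, Prod.fst_swap, Prod.snd_swap] at hp hq
    omega
  rw [hook, filter_union, card_union_of_disjoint (disjoint_filter_filter hdisj), filter_image,
    card_image_of_injective _ Prod.swap_injective,
    card_rowArm_filter_attacks (by simp; omega) hi hj,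
    ← card_rowArm_filter_attacks (by simp; omega) hj hi]
  congr 1
  exact congrArg card (filter_congr fun p _ => attacks_swap (q := (j, i)))

theorem hook_one : hook 1 = ∅ := by
  ext p
  simp only [mem_hook, notMem_empty, iff_false]
  omega

theorem LegalReachable.hook_add_two {n t k : ℕ} (h : LegalReachable n t (hook k)) (hk : Odd k)
    (hkn : k + 2 ≤ n) : LegalReachable n (t + 4) (hook (k + 2)) := by
  obtain ⟨r, rfl⟩ := hk
  have h₁ := h.insert (p := (1, 2 * r + 2)) (by simp [board]; omega) (by simp) (by
    rw [Nat.even_iff, card_hook_filter_attacks (by simp) le_rfl (by omega)]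
    simp only [rowArmAttackCount]
    split_ifs <;> omega)
  have h₂ := h₁.insert (p := (2 * r + 3, 1)) (by simp [board]; omega) (by simp) (by
    rw [Nat.even_iff, card_filter_insert _ (by simp),
      card_hook_filter_attacks (by simp) (by omega) le_rfl]
    simp [rowArmAttackCount, attacks]
    split_ifs <;> omega)
  have h₃ := h₂.insert (p := (1, 2 * r + 3)) (by simp [board]; omega) (by simp) (by
    rw [Nat.even_iff, card_filter_insert _ (by simp), card_filter_insert _ (by simp),
      card_hook_filter_attacks (by simp) le_rfl (by omega)]
    simp [rowArmAttackCount, attacks]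
    split_ifs <;> omega)
  have h₄ := h₃.insert (p := (2 * r + 2, 1)) (by simp [board]; omega) (by simp) (by
    rw [Nat.even_iff, card_filter_insert _ (by simp), card_filter_insert _ (by simp),
      card_filter_insert _ (by simp), card_hook_filter_attacks (by simp) (by omega) le_rfl]
    simp [rowArmAttackCount, attacks]
    split_ifs <;> omega)
  convert h₄ using 1
  ext ⟨a, b⟩
  simp only [mem_hook, mem_insert, Prod.mk.injEq]
  omega

theorem legalReachable_hook (n s : ℕ) (hs : 2 * s + 1 ≤ n) :
    LegalReachable n (4 * s) (hook (2 * s + 1)) := by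
  induction s with
  | zero => simpa [hook_one] using LegalReachable.empty
  | succ s ih => exact (ih (by omega)).hook_add_two ⟨s, rfl⟩ (by omega)

theorem locked_insert_one_one_hook (n : ℕ) : Locked n (insert (1, 1) (hook n)) := by
  rintro ⟨i, j⟩ hp hij
  simp only [board, mem_product, mem_Icc] at hp
  simp only [mem_insert, Prod.mk.injEq, not_or] at hij
  rw [card_filter_insert _ (by simp), card_hook_filter_attacks hij.2 hp.1.1 hp.2.1, Nat.odd_iff]
  simp only [mem_hook] at hij
  simp [rowArmAttackCount, attacks]
  split_ifs <;> omega

theorem locked_insert_far_corner_hook (m : ℕ) :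
    Locked (2 * m + 2) (insert (2 * m + 2, 2 * m + 2) (hook (2 * m + 1))) := by
  rintro ⟨i, j⟩ hp hij
  simp only [board, mem_product, mem_Icc] at hp
  simp only [mem_insert, Prod.mk.injEq, not_or] at hij
  rw [card_filter_insert _ (by simp), card_hook_filter_attacks hij.2 hp.1.1 hp.2.1, Nat.odd_iff]
  simp only [mem_hook] at hij
  simp [rowArmAttackCount, attacks]
  split_ifs <;> omega

/-- For odd positive `n`, at most `2n - 1` queens are needed to lock the board; for
even `n > 2`, at most `2n - 3` queens are needed to lock the board. -/
theorem locking_upper_bound (n : ℕ) :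
    (0 < n → Odd n → ∃ (k : ℕ) (q : Fin k → ℕ × ℕ), k ≤ 2 * n - 1 ∧
      IsLegalSeq n q ∧ Locked n (Finset.univ.image q)) ∧
    (2 < n → Even n → ∃ (k : ℕ) (q : Fin k → ℕ × ℕ), k ≤ 2 * n - 3 ∧
      IsLegalSeq n q ∧ Locked n (Finset.univ.image q)) := by
  constructor
  · rintro - ⟨m, rfl⟩
    obtain ⟨q, hq, himage⟩ := (legalReachable_hook (2 * m + 1) m le_rfl).insert (p := (1, 1))
      (by simp [board]) (by simp) (by
        rw [Nat.even_iff, card_hook_filter_attacks (by simp) le_rfl le_rfl]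
        simp only [rowArmAttackCount]
        omega)
    exact ⟨4 * m + 1, q, by omega, hq, himage ▸ locked_insert_one_one_hook _⟩
  · rintro hn ⟨m, hm⟩
    obtain ⟨m, rfl⟩ : ∃ k, n = 2 * k + 2 := ⟨m - 1, by omega⟩
    obtain ⟨q, hq, himage⟩ := (legalReachable_hook (2 * m + 2) m (by omega)).insert
      (p := (2 * m + 2, 2 * m + 2)) (by simp [board]) (by simp) (by
        rw [Nat.even_iff, card_hook_filter_attacks (by simp) (by omega) (by omega)]
        simp only [rowArmAttackCount]
        split_ifs <;> omega)
    exact ⟨4 * m + 1, q, by omega, hq, himage ▸ locked_insert_far_corner_hook m⟩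
end

section
/- Let n ≥ 3 be an integer and let Q be the set of squares of the n×n chessboard lying in the first two rows or the first two columns, i.e., Q = {(i,j) : i ≤ 2 or j ≤ 2}. Then every square (i,j) with i ≥ 3 and j ≥ 3 is attacked by an even number of squares of Q. -/
/-!
The attackers of `(i, j)` split along the four lines through `(i, j)`, which meet only there.
The row, the column and the diagonal each meet the first two columns, resp. rows, in exactly two
squares. On the anti-diagonal, reflection in the main diagonal swaps the squares lying in the
first two rows with those in the first two columns, and none lies in both since `i + j ≥ 6`.
-/

namespace Finset

variable {α : Type*}

theorem card_filter_or_of_disjoint [DecidableEq α] {s : Finset α} {P Q : α → Prop}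
    [DecidablePred P] [DecidablePred Q] (h : ∀ a ∈ s, P a → ¬ Q a) :
    #(s.filter fun a => P a ∨ Q a) = #(s.filter P) + #(s.filter Q) := by
  rw [filter_or, card_union_of_disjoint (disjoint_filter.2 h)]

theorem even_card_of_involution {s : Finset α} (f : α → α) (P : α → Prop) [DecidablePred P]
    (hf : ∀ a ∈ s, f a ∈ s) (hff : ∀ a ∈ s, f (f a) = a) (hP : ∀ a ∈ s, P (f a) ↔ ¬ P a) :
    Even #s := by
  have hcard : #(s.filter fun a => ¬ P a) = #(s.filter P) :=
    card_nbij' f f (fun a ha => by simp_all) (fun a ha => by simp_all)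
      (fun a ha => hff a (mem_filter.1 ha).1) (fun a ha => hff a (mem_filter.1 ha).1)
  rw [← card_filter_add_card_filter_not P, hcard]
  exact ⟨_, rfl⟩

end Finset

open Finset

theorem card_filter_attacks {s : Finset (ℕ × ℕ)} {q : ℕ × ℕ} (hq : q ∉ s) :
    #(s.filter fun p => attacks p q) =
      #(s.filter fun p => p.1 = q.1) + #(s.filter fun p => p.2 = q.2) +
        #(s.filter fun p => p.1 + p.2 = q.1 + q.2) +
        #(s.filter fun p => p.1 + q.2 = q.1 + p.2) := by
  have hne : ∀ p ∈ s, p ≠ q := fun p hp h => hq (h ▸ hp)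
  have hlines : ∀ p ∈ s, ¬ (p.1 = q.1 ∧ p.2 = q.2) := fun p hp h => hne p hp (Prod.ext h.1 h.2)
  rw [filter_congr fun p hp => show attacks p q ↔ _ from and_iff_right (hne p hp),
    card_filter_or_of_disjoint, card_filter_or_of_disjoint, card_filter_or_of_disjoint,
    add_assoc, add_assoc]
  all_goals intro p hp; have := hlines p hp; omega

def firstTwoRowsCols (n : ℕ) : Finset (ℕ × ℕ) := (board n).filter fun p => p.1 ≤ 2 ∨ p.2 ≤ 2

section

variable {n i j : ℕ}

theorem mem_firstTwoRowsCols {p : ℕ × ℕ} :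
    p ∈ firstTwoRowsCols n ↔ (1 ≤ p.1 ∧ p.1 ≤ n) ∧ (1 ≤ p.2 ∧ p.2 ≤ n) ∧ (p.1 ≤ 2 ∨ p.2 ≤ 2) := by
  simp only [firstTwoRowsCols, board, mem_filter, mem_product, mem_Icc, and_assoc]

theorem card_firstTwoRowsCols_filter_fst_eq (hi : 3 ≤ i) (hin : i ≤ n) :
    #((firstTwoRowsCols n).filter fun p => p.1 = i) = 2 := by
  rw [card_eq_two]
  refine ⟨(i, 1), (i, 2), by simp, ?_⟩
  ext ⟨a, b⟩
  simp only [mem_filter, mem_firstTwoRowsCols, mem_insert, mem_singleton, Prod.mk.injEq]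
  omega

theorem card_firstTwoRowsCols_filter_snd_eq (hj : 3 ≤ j) (hjn : j ≤ n) :
    #((firstTwoRowsCols n).filter fun p => p.2 = j) = 2 := by
  rw [card_eq_two]
  refine ⟨(1, j), (2, j), by simp, ?_⟩
  ext ⟨a, b⟩
  simp only [mem_filter, mem_firstTwoRowsCols, mem_insert, mem_singleton, Prod.mk.injEq]
  omega

theorem card_firstTwoRowsCols_filter_diag (hi : 3 ≤ i) (hj : 3 ≤ j) (hin : i ≤ n)
    (hjn : j ≤ n) : #((firstTwoRowsCols n).filter fun p => p.1 + j = i + p.2) = 2 := by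
  rw [card_eq_two]
  rcases le_total i j with hij | hji
  · refine ⟨(1, j + 1 - i), (2, j + 2 - i), by simp, ?_⟩
    ext ⟨a, b⟩
    simp only [mem_filter, mem_firstTwoRowsCols, mem_insert, mem_singleton, Prod.mk.injEq]
    omega
  · refine ⟨(i + 1 - j, 1), (i + 2 - j, 2), by simp, ?_⟩
    ext ⟨a, b⟩
    simp only [mem_filter, mem_firstTwoRowsCols, mem_insert, mem_singleton, Prod.mk.injEq]
    omega

theorem swap_mem_firstTwoRowsCols {p : ℕ × ℕ} (hp : p ∈ firstTwoRowsCols n) :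
    p.swap ∈ firstTwoRowsCols n := by
  rw [mem_firstTwoRowsCols] at hp ⊢
  simp only [Prod.fst_swap, Prod.snd_swap]
  omega

theorem even_card_firstTwoRowsCols_filter_antidiag (hij : 6 ≤ i + j) :
    Even #((firstTwoRowsCols n).filter fun p => p.1 + p.2 = i + j) :=
  even_card_of_involution Prod.swap (fun p => p.1 ≤ 2)
    (fun p hp => by
      rw [mem_filter] at hp ⊢
      exact ⟨swap_mem_firstTwoRowsCols hp.1, by simp only [Prod.fst_swap, Prod.snd_swap]; omega⟩)
    (fun p _ => p.swap_swap)
    (fun p hp => by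
      rw [mem_filter, mem_firstTwoRowsCols] at hp
      simp only [Prod.fst_swap]
      omega)

end

theorem first_two_rows_cols_even_attack_general (n : ℕ) (i j : ℕ)
    (hij : (i, j) ∈ board n) (hi : 3 ≤ i) (hj : 3 ≤ j) :
    Even ((((board n).filter fun p => p.1 ≤ 2 ∨ p.2 ≤ 2).filter
      fun p => attacks p (i, j)).card) := by
  simp only [board, mem_product, mem_Icc] at hij
  have hQ : (i, j) ∉ firstTwoRowsCols n := fun h => by
    rw [mem_firstTwoRowsCols] at h; omega
  rw [← firstTwoRowsCols, card_filter_attacks hQ,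
    card_firstTwoRowsCols_filter_fst_eq hi hij.1.2, card_firstTwoRowsCols_filter_snd_eq hj hij.2.2,
    card_firstTwoRowsCols_filter_diag hi hj hij.1.2 hij.2.2]
  have hanti := even_card_firstTwoRowsCols_filter_antidiag (n := n) (show 6 ≤ i + j by omega)
  exact ((even_two.add even_two).add hanti).add even_two

/-- For `n ≥ 3`, every square `(i,j)` with `i ≥ 3` and `j ≥ 3` is attacked by an even
number of squares lying in the first two rows or first two columns. -/
theorem first_two_rows_cols_even_attack (n : ℕ) (hn : 3 ≤ n) (i j : ℕ)
    (hij : (i, j) ∈ board n) (hi : 3 ≤ i) (hj : 3 ≤ j) :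
    Even ((((board n).filter fun p => p.1 ≤ 2 ∨ p.2 ≤ 2).filter
      fun p => attacks p (i, j)).card) :=
  first_two_rows_cols_even_attack_general n i j hij hi hj
end
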